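/- Harmonic (stuffle) product relation for multiple zeta values: let R be the free ℚ-vector space on the set of indices, and let * : R × R → R be the ℚ-bilinear product determined recursively by ∅ * k = k * ∅ = k and (k⌢a) * (l⌢b) = ((k⌢a) * l)⌢b + (k * (l⌢b))⌢a + (k * l)⌢(a+b), where k⌢a denotes the index obtained by appending the positive integer a to the index k (and ⌢ is extended linearly). Then for all admissible indices k and l, every index appearing in k * l is admissible, and ζ(k * l) = ζ(k)·ζ(l), where ζ is extended ℚ-linearly to the span of admissible indices. -/

import Mathlib

/- STATEMENT 13: the harmonic (stuffle) relation ζ(k * l) = ζ(k)ζ(l) for admissible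
indices, where * is the ℚ-bilinear stuffle product on the free ℚ-vector space on indices. -/

noncomputable section

/-- The multiple zeta value of an index (as a `tsum`, which equals the sum of the
convergent series when the index is admissible). -/
def mzv (k : List ℕ) : ℝ :=
  ∑' n : {f : Fin k.length → ℕ // StrictMono f ∧ ∀ i, 0 < f i},
    ∏ i, ((n.1 i : ℝ) ^ k.get i)⁻¹

/-- Multiple zeta value of an index of positive integers. -/
def mzvP (k : List ℕ+) : ℝ := mzv (k.map fun a => (a : ℕ))

/-- An index is admissible if it is empty or its last entry is ≥ 2. -/
def Admissible (k : List ℕ+) : Prop := ∀ a : ℕ+, k.getLast? = some a → 2 ≤ a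

/-- The free ℚ-vector space on the set of indices. -/
abbrev R : Type := List ℕ+ →₀ ℚ

/-- Basis vector of the free ℚ-vector space on indices. -/
def δ (k : List ℕ+) : R := Finsupp.single k 1

/-- Linear extension of appending the entry `a` to an index. -/
def appendOp (a : ℕ+) : R →ₗ[ℚ] R := Finsupp.lmapDomain ℚ ℚ (fun l => l ++ [a])

/-
Truncating the series at `n_r ≤ N` gives finite sums `ζ_N` with
`ζ_N(k⌢a) = ∑_{n<N} (n+1)^(-a) ζ_n(k)`. Splitting the product `ζ_N(k⌢a) ζ_N(l⌢b)` according to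
whether the last summation variable of the first factor is smaller than, larger than or equal to
that of the second gives exactly the three terms of the stuffle recursion, so for every `N` the
linear extension of `ζ_N` is multiplicative for `*`. Every index in `k * l` ends in `a`, `b` or
`a + b`, hence is admissible. For admissible `k` the truncations are bounded, since
`ζ_n(k) ≤ H_n ^ r = O(n ^ (1/2))` and the last exponent is at least `2`; so they increase to
`ζ(k)`, and `N → ∞` gives `ζ(k * l) = ζ(k) ζ(l)`.
-/

open Finset Filter Topology

lemma Fin.strictMono_snoc_iff {α : Type*} [Preorder α] {n : ℕ} {f : Fin n → α} {x : α} :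
    StrictMono (Fin.snoc f x : Fin (n + 1) → α) ↔ StrictMono f ∧ ∀ i, f i < x := by
  rw [← Fin.insertNth_last', Fin.strictMono_insertNth_iff]
  simp [Fin.castSucc_lt_last]

lemma sum_range_mul_sum_range {S : Type*} [CommSemiring S] (f g : ℕ → S) (N : ℕ) :
    (∑ i ∈ range N, f i) * ∑ j ∈ range N, g j =
      ∑ j ∈ range N, (∑ i ∈ range j, f i) * g j + ∑ i ∈ range N, f i * ∑ j ∈ range i, g j +
        ∑ i ∈ range N, f i * g i := by
  induction N with
  | zero => simp
  | succ N ih =>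
    simp only [sum_range_succ, add_mul, mul_add, ih]
    ring

def incrTuples (r N : ℕ) : Finset (Fin r → ℕ) :=
  {f ∈ Fintype.piFinset fun _ => Icc 1 N | StrictMono f}

lemma mem_incrTuples {r N : ℕ} {f : Fin r → ℕ} :
    f ∈ incrTuples r N ↔ StrictMono f ∧ ∀ i, 1 ≤ f i ∧ f i ≤ N := by
  simp [incrTuples, and_comm]

lemma sum_incrTuples_succ {M : Type*} [AddCommMonoid M] (r N : ℕ) (φ : (Fin (r + 1) → ℕ) → M) :
    ∑ f ∈ incrTuples (r + 1) N, φ f =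
      ∑ n ∈ range N, ∑ u ∈ incrTuples r n, φ (Fin.snoc u (n + 1)) := by
  rw [sum_sigma']
  symm
  refine sum_nbij' (fun p => Fin.snoc p.2 (p.1 + 1)) (fun f => ⟨f (Fin.last r) - 1, Fin.init f⟩)
    ?_ ?_ ?_ ?_ fun _ _ => rfl
  · rintro ⟨n, u⟩ hu
    simp only [mem_sigma, mem_range, mem_incrTuples] at hu ⊢
    obtain ⟨hn, hmono, hbd⟩ := hu
    refine ⟨Fin.strictMono_snoc_iff.2 ⟨hmono, fun i => Nat.lt_succ_of_le (hbd i).2⟩,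
      Fin.lastCases ?_ fun i => ?_⟩
    · simp only [Fin.snoc_last]; omega
    · simp only [Fin.snoc_castSucc]; have := hbd i; omega
  · intro f hf
    simp only [mem_sigma, mem_range, mem_incrTuples] at hf ⊢
    obtain ⟨hmono, hbd⟩ := hf
    have hlast := hbd (Fin.last r)
    refine ⟨by omega, hmono.comp Fin.strictMono_castSucc, fun i => ⟨(hbd _).1, ?_⟩⟩
    have := hmono (Fin.castSucc_lt_last i)
    simp only [Fin.init]
    omega
  · rintro ⟨n, u⟩ -
    simp [Fin.init_snoc]
  · intro f hf
    have := (mem_incrTuples.1 hf).2 (Fin.last r)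
    dsimp only
    rw [Nat.sub_add_cancel this.1, Fin.snoc_init_self]

def mzvTrunc (N : ℕ) (k : List ℕ) : ℝ :=
  ∑ f ∈ incrTuples k.length N, ∏ i, ((f i : ℝ) ^ k.get i)⁻¹

lemma mzvTrunc_nil (N : ℕ) : mzvTrunc N [] = 1 := by
  have : ∀ f : Fin 0 → ℕ, StrictMono f := fun _ i => i.elim0
  simp [mzvTrunc, incrTuples, this]

lemma sum_incrTuples_cast {r s : ℕ} (h : r = s) (N : ℕ) (e : Fin r → ℕ) :
    ∑ f ∈ incrTuples r N, ∏ i, ((f i : ℝ) ^ e i)⁻¹ =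
      ∑ f ∈ incrTuples s N, ∏ i, ((f i : ℝ) ^ e (Fin.cast h.symm i))⁻¹ := by
  subst h
  rfl

lemma mzvTrunc_append_singleton (N : ℕ) (k : List ℕ) (a : ℕ) :
    mzvTrunc N (k ++ [a]) = ∑ n ∈ range N, ((n + 1 : ℝ) ^ a)⁻¹ * mzvTrunc n k := by
  rw [mzvTrunc, sum_incrTuples_cast (by simp : (k ++ [a]).length = k.length + 1),
    sum_incrTuples_succ]
  refine sum_congr rfl fun n _ => ?_
  rw [mzvTrunc, mul_sum]
  refine sum_congr rfl fun u _ => ?_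
  rw [Fin.prod_univ_castSucc, mul_comm]
  simp [List.getElem_append_left]

lemma mzvTrunc_nonneg (N : ℕ) (k : List ℕ) : 0 ≤ mzvTrunc N k :=
  sum_nonneg fun _ _ => prod_nonneg fun _ _ => by positivity

lemma harmonic_nonneg (n : ℕ) : 0 ≤ harmonic n :=
  sum_nonneg fun _ _ => by positivity

lemma harmonic_monotone : Monotone harmonic :=
  monotone_nat_of_le_succ fun n => by
    rw [harmonic_succ]
    exact le_add_of_nonneg_right (by positivity)

lemma mzvTrunc_le_harmonic_pow {k : List ℕ} (hk : ∀ a ∈ k, 1 ≤ a) (N : ℕ) :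
    mzvTrunc N k ≤ (harmonic N : ℝ) ^ k.length := by
  induction k using List.reverseRecOn generalizing N with
  | nil => simp [mzvTrunc_nil]
  | append_singleton K a ih =>
    have ha : 1 ≤ a := hk a (by simp)
    have hK := ih fun b hb => hk b (by simp [hb])
    rw [mzvTrunc_append_singleton]
    calc ∑ n ∈ range N, ((n + 1 : ℝ) ^ a)⁻¹ * mzvTrunc n K
        ≤ ∑ n ∈ range N, (n + 1 : ℝ)⁻¹ * (harmonic N : ℝ) ^ K.length := by
          refine sum_le_sum fun n hn => mul_le_mul ?_ ?_ (mzvTrunc_nonneg _ _) (by positivity)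
          · exact inv_anti₀ (by positivity : (0 : ℝ) < n + 1)
              (le_self_pow₀ (by linarith) (by omega))
          · refine (hK n).trans (pow_le_pow_left₀ (by exact_mod_cast harmonic_nonneg n) ?_ _)
            exact_mod_cast harmonic_monotone (mem_range.1 hn).le
      _ = (harmonic N : ℝ) ^ (K ++ [a]).length := by
          rw [← sum_mul, List.length_append, List.length_singleton, pow_succ']
          push_cast [harmonic]
          rfl

lemma one_add_log_pow_le (r : ℕ) {x : ℝ} (hx : 1 ≤ x) :
    (1 + Real.log x) ^ r ≤ (2 * r + 2) ^ r * x ^ (1 / 2 : ℝ) := by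
  set ε : ℝ := (2 * r + 1)⁻¹
  have hε : 0 < ε := by positivity
  have hxε : 1 ≤ x ^ ε := Real.one_le_rpow hx hε.le
  have hlog : 1 + Real.log x ≤ (2 * r + 2) * x ^ ε := by
    have := Real.log_le_rpow_div (x := x) (by linarith) hε
    rw [div_eq_mul_inv, inv_inv] at this
    nlinarith
  calc (1 + Real.log x) ^ r ≤ ((2 * r + 2) * x ^ ε) ^ r :=
        pow_le_pow_left₀ (by linarith [Real.log_nonneg hx]) hlog r
    _ = (2 * r + 2) ^ r * x ^ (ε * r) := by
        rw [mul_pow, Real.rpow_mul (by linarith), Real.rpow_natCast]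
    _ ≤ (2 * r + 2) ^ r * x ^ (1 / 2 : ℝ) := by
        refine mul_le_mul_of_nonneg_left (Real.rpow_le_rpow_of_exponent_le hx ?_) (by positivity)
        rw [inv_mul_le_iff₀ (by positivity)]
        linarith

lemma summable_inv_rpow_three_halves : Summable fun n : ℕ => ((n + 1 : ℝ) ^ (3 / 2 : ℝ))⁻¹ := by
  have := (summable_nat_add_iff 1).2 (Real.summable_nat_rpow_inv.2 (by norm_num : (1 : ℝ) < 3 / 2))
  simpa using this

lemma mzvTrunc_append_singleton_le {K : List ℕ} (hK : ∀ b ∈ K, 1 ≤ b) {a : ℕ} (ha : 2 ≤ a)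
    (N : ℕ) : mzvTrunc N (K ++ [a]) ≤
      (2 * K.length + 2) ^ K.length * ∑' n : ℕ, ((n + 1 : ℝ) ^ (3 / 2 : ℝ))⁻¹ := by
  set C : ℝ := (2 * K.length + 2) ^ K.length
  have hterm (n : ℕ) :
      ((n + 1 : ℝ) ^ a)⁻¹ * mzvTrunc n K ≤ C * ((n + 1 : ℝ) ^ (3 / 2 : ℝ))⁻¹ := by
    have hx : (1 : ℝ) ≤ n + 1 := by linarith [n.cast_nonneg (α := ℝ)]
    have htrunc : mzvTrunc n K ≤ (1 + Real.log (n + 1)) ^ K.length := calc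
      mzvTrunc n K ≤ (harmonic n : ℝ) ^ K.length := mzvTrunc_le_harmonic_pow hK n
      _ ≤ (harmonic (n + 1) : ℝ) ^ K.length :=
          pow_le_pow_left₀ (by exact_mod_cast harmonic_nonneg n)
            (by exact_mod_cast harmonic_monotone n.le_succ) _
      _ ≤ (1 + Real.log (n + 1)) ^ K.length :=
          pow_le_pow_left₀ (by exact_mod_cast harmonic_nonneg _)
            (by exact_mod_cast harmonic_le_one_add_log (n + 1)) _
    have hsplit : (n + 1 : ℝ) ^ (3 / 2 : ℝ) * (n + 1 : ℝ) ^ (1 / 2 : ℝ) = (n + 1 : ℝ) ^ 2 := by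
      rw [← Real.rpow_add (by linarith), ← Real.rpow_natCast]
      norm_num
    calc ((n + 1 : ℝ) ^ a)⁻¹ * mzvTrunc n K
        ≤ ((n + 1 : ℝ) ^ 2)⁻¹ * (C * (n + 1 : ℝ) ^ (1 / 2 : ℝ)) :=
          mul_le_mul (inv_anti₀ (by positivity) (pow_le_pow_right₀ hx ha))
            (htrunc.trans (one_add_log_pow_le _ hx)) (mzvTrunc_nonneg _ _) (by positivity)
      _ = C * ((n + 1 : ℝ) ^ (3 / 2 : ℝ))⁻¹ := by
          rw [← hsplit]
          field_simp
  rw [mzvTrunc_append_singleton, ← tsum_mul_left]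
  refine (sum_le_sum fun n _ => hterm n).trans ?_
  exact (summable_inv_rpow_three_halves.mul_left C).sum_le_tsum _ fun n _ => by positivity

lemma tendsto_mzvTrunc_of_le {k : List ℕ} {C : ℝ} (hC : ∀ N, mzvTrunc N k ≤ C) :
    Tendsto (fun N => mzvTrunc N k) atTop (𝓝 (mzv k)) := by
  let p : (Fin k.length → ℕ) → Prop := fun f => StrictMono f ∧ ∀ i, 0 < f i
  let term : Subtype p → ℝ := fun x => ∏ i, ((x.1 i : ℝ) ^ k.get i)⁻¹
  let box : ℕ → Finset (Subtype p) := fun N => (incrTuples k.length N).subtype p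
  have hterm : ∀ x, 0 ≤ term x := fun x => prod_nonneg fun _ _ => by positivity
  have hbox (N : ℕ) : ∑ x ∈ box N, term x = mzvTrunc N k :=
    sum_subtype_of_mem (fun f : Fin k.length → ℕ => ∏ i, ((f i : ℝ) ^ k.get i)⁻¹)
      fun f hf => ⟨(mem_incrTuples.1 hf).1, fun i => ((mem_incrTuples.1 hf).2 i).1⟩
  have hbox_tendsto : Tendsto box atTop atTop := by
    refine tendsto_atTop_finset_of_monotone (fun N M hNM x hx => ?_) fun x => ⟨univ.sup x.1, ?_⟩
    · simp only [box, mem_subtype, mem_incrTuples] at hx ⊢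
      exact ⟨hx.1, fun i => ⟨(hx.2 i).1, (hx.2 i).2.trans hNM⟩⟩
    · simp only [box, mem_subtype, mem_incrTuples]
      exact ⟨x.2.1, fun i => ⟨x.2.2 i, le_sup (mem_univ i)⟩⟩
  have hsum : Summable term := by
    refine summable_of_sum_le (c := C) hterm fun u => ?_
    obtain ⟨N, hN⟩ := (hbox_tendsto.eventually (eventually_ge_atTop u)).exists
    calc ∑ x ∈ u, term x ≤ ∑ x ∈ box N, term x :=
          sum_le_sum_of_subset_of_nonneg hN fun x _ _ => hterm x
      _ ≤ C := (hbox N).trans_le (hC N)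
  exact (hsum.hasSum.comp hbox_tendsto).congr hbox

lemma mzvP_eq_mzv_map (k : List ℕ+) : mzvP k = mzv (k.map (↑)) := by
  simp [mzvP, ← List.map_eq_flatMap, Function.comp_def]

lemma appendOp_δ (a : ℕ+) (k : List ℕ+) : appendOp a (δ k) = δ (k ++ [a]) := by
  simp [appendOp, δ]

def mzvTruncEval (N : ℕ) : R →ₗ[ℚ] ℝ :=
  Finsupp.linearCombination ℚ fun m => mzvTrunc N (m.map (↑))

lemma mzvTruncEval_δ (N : ℕ) (m : List ℕ+) :
    mzvTruncEval N (δ m) = mzvTrunc N (m.map (↑)) := by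
  simp [mzvTruncEval, δ]

lemma mzvTruncEval_appendOp (c : ℕ+) (X : R) (N : ℕ) :
    mzvTruncEval N (appendOp c X) =
      ∑ n ∈ range N, ((n + 1 : ℝ) ^ (c : ℕ))⁻¹ * mzvTruncEval n X := by
  induction X using Finsupp.induction_linear with
  | zero => simp
  | add X Y hX hY => simp only [map_add, hX, hY, mul_add, sum_add_distrib]
  | single m q =>
    simp [mzvTruncEval, appendOp, Rat.smul_def, mzvTrunc_append_singleton, mul_sum, mul_left_comm]

lemma tendsto_mzvTrunc_map {k : List ℕ+} (hk : Admissible k) :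
    Tendsto (fun N => mzvTrunc N (k.map (↑))) atTop (𝓝 (mzvP k)) := by
  rw [mzvP_eq_mzv_map]
  rcases k.eq_nil_or_concat' with rfl | ⟨K, a, rfl⟩
  · exact tendsto_mzvTrunc_of_le fun N => (mzvTrunc_nil N).le
  · have ha : 2 ≤ (a : ℕ) := by exact_mod_cast hk a (by simp)
    rw [List.map_append, List.map_singleton]
    refine tendsto_mzvTrunc_of_le (mzvTrunc_append_singleton_le (fun b hb => ?_) ha)
    obtain ⟨c, -, rfl⟩ := List.mem_map.1 hb
    exact c.pos

def admissibleSpan : Submodule ℚ R := Finsupp.supported ℚ ℚ {m | Admissible m}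

lemma tendsto_mzvTruncEval {X : R} (hX : X ∈ admissibleSpan) :
    Tendsto (fun N => mzvTruncEval N X) atTop (𝓝 (X.sum fun m c => (c : ℝ) * mzvP m)) := by
  simp only [mzvTruncEval, Finsupp.linearCombination_apply, Finsupp.sum, Rat.smul_def]
  exact tendsto_finsetSum _ fun m hm => (tendsto_mzvTrunc_map (hX hm)).const_mul _

lemma appendOp_mem_admissibleSpan {c : ℕ+} (hc : 2 ≤ c) (X : R) :
    appendOp c X ∈ admissibleSpan := by
  classical
  intro m hm
  obtain ⟨m', -, rfl⟩ := mem_image.1 (Finsupp.mapDomain_support hm)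
  intro b hb
  simp only [List.getLast?_append, List.getLast?_singleton, Option.some_or, Option.some.injEq] at hb
  exact hb ▸ hc

structure IsStuffle (mul : R →ₗ[ℚ] R →ₗ[ℚ] R) : Prop where
  nil_mul : ∀ l, mul (δ []) (δ l) = δ l
  mul_nil : ∀ k, mul (δ k) (δ []) = δ k
  append_mul_append : ∀ k l a b, mul (δ (k ++ [a])) (δ (l ++ [b])) =
    appendOp b (mul (δ (k ++ [a])) (δ l)) + appendOp a (mul (δ k) (δ (l ++ [b])))
      + appendOp (a + b) (mul (δ k) (δ l))

namespace IsStuffle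

variable {mul : R →ₗ[ℚ] R →ₗ[ℚ] R}

lemma mul_δ_mem_admissibleSpan (h : IsStuffle mul) {k l : List ℕ+} (hk : Admissible k)
    (hl : Admissible l) : mul (δ k) (δ l) ∈ admissibleSpan := by
  rcases k.eq_nil_or_concat' with rfl | ⟨K, a, rfl⟩
  · rw [h.nil_mul]
    exact Finsupp.single_mem_supported ℚ _ hl
  rcases l.eq_nil_or_concat' with rfl | ⟨L, b, rfl⟩
  · rw [h.mul_nil]
    exact Finsupp.single_mem_supported ℚ _ hk
  have hab : (2 : ℕ+) ≤ a + b := add_le_add one_le one_le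
  rw [h.append_mul_append]
  exact add_mem (add_mem (appendOp_mem_admissibleSpan (hl b (by simp)) _)
    (appendOp_mem_admissibleSpan (hk a (by simp)) _)) (appendOp_mem_admissibleSpan hab _)

lemma mzvTruncEval_mul (h : IsStuffle mul) (k l : List ℕ+) (N : ℕ) :
    mzvTruncEval N (mul (δ k) (δ l)) = mzvTruncEval N (δ k) * mzvTruncEval N (δ l) := by
  induction k using List.reverseRecOn generalizing l N with
  | nil => simp [h.nil_mul, mzvTruncEval_δ, mzvTrunc_nil]
  | append_singleton K a ihK =>
    induction l using List.reverseRecOn generalizing N with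
    | nil => simp [h.mul_nil, mzvTruncEval_δ, mzvTrunc_nil]
    | append_singleton L b ihL =>
      rw [h.append_mul_append, map_add, map_add, mzvTruncEval_appendOp, mzvTruncEval_appendOp,
        mzvTruncEval_appendOp]
      simp only [ihK, ihL]
      simp only [← appendOp_δ, mzvTruncEval_appendOp]
      rw [sum_range_mul_sum_range]
      simp only [PNat.add_coe, pow_add, mul_inv, ← sum_add_distrib]
      exact sum_congr rfl fun n _ => by ring

end IsStuffle

theorem stmt_13
    (mul : R →ₗ[ℚ] R →ₗ[ℚ] R)
    (hOneL : ∀ l : List ℕ+, mul (δ []) (δ l) = δ l)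
    (hOneR : ∀ k : List ℕ+, mul (δ k) (δ []) = δ k)
    (hRec : ∀ (k l : List ℕ+) (a b : ℕ+),
      mul (δ (k ++ [a])) (δ (l ++ [b])) =
        appendOp b (mul (δ (k ++ [a])) (δ l))
        + appendOp a (mul (δ k) (δ (l ++ [b])))
        + appendOp (a + b) (mul (δ k) (δ l))) :
    ∀ k l : List ℕ+, Admissible k → Admissible l →
      (∀ m ∈ (mul (δ k) (δ l)).support, Admissible m) ∧
      ((mul (δ k) (δ l)).sum fun m c => c * mzvP m) = mzvP k * mzvP l := by
  intro k l hk hl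
  have hmul : IsStuffle mul := ⟨hOneL, hOneR, hRec⟩
  have hspan := hmul.mul_δ_mem_admissibleSpan hk hl
  refine ⟨fun m hm => hspan hm, tendsto_nhds_unique (tendsto_mzvTruncEval hspan) ?_⟩
  simp only [hmul.mzvTruncEval_mul, mzvTruncEval_δ]
  exact (tendsto_mzvTrunc_map hk).mul (tendsto_mzvTrunc_map hl)
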